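/- arXiv:1210.5758 — 2 statements merged into one kernel-verified Lean document; each statement's English description precedes it below -/
import Mathlib

section
/- Let U ⊆ ℝ² be a bounded open set, and let gₙ : U → ℝ² be 1-Lipschitz maps converging uniformly to a map g, such that λ(gₙ(U)) ≥ λ(U) - 1/n for each n ≥ 1. Then λ(g(U)) = λ(U). -/
/-!
A 1-Lipschitz map does not increase Lebesgue measure, so the limit `g`, being 1-Lipschitz
itself, gives `λ(g(U)) ≤ λ(U)`, and the hypothesis forces `λ(gₙ(U)) → λ(U)`. For the reverse
inequality, approximate `U` from inside by a compact `K`: for large `n` the set `gₙ(K)` lies in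
a thin closed thickening of the compact set `g(K)`, whose measure is close to `λ(g(K))`, while
`gₙ(U \ K)` has measure at most `λ(U \ K)`. Hence `λ(g(U))` bounds `limsup λ(gₙ(U)) = λ(U)`.
-/

open MeasureTheory Metric Set ENNReal Filter Topology

theorem LipschitzOnWith.of_tendsto {α β ι : Type*} [PseudoEMetricSpace α] [PseudoEMetricSpace β]
    {l : Filter ι} [l.NeBot] {F : ι → α → β} {f : α → β} {K : NNReal} {s : Set α}
    (hF : ∀ᶠ i in l, LipschitzOnWith K (F i) s)
    (hlim : ∀ x ∈ s, Tendsto (fun i => F i x) l (𝓝 (f x))) :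
    LipschitzOnWith K f s := by
  simp only [lipschitzOnWith_iff_restrict] at hF ⊢
  exact (isClosed_setOfPred_lipschitzWith K).mem_of_tendsto
    (tendsto_pi_nhds.2 fun x => hlim x x.2) hF

theorem LipschitzOnWith.addHaar_image_le {E : Type*} [NormedAddCommGroup E] [NormedSpace ℝ E]
    [FiniteDimensional ℝ E] [MeasurableSpace E] [BorelSpace E] (μ : Measure E)
    [μ.IsAddHaarMeasure] {K : NNReal} {f : E → E} {s : Set E} (hf : LipschitzOnWith K f s) :
    μ (f '' s) ≤ (K : ℝ≥0∞) ^ Module.finrank ℝ E * μ s := by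
  rw [Measure.isAddLeftInvariant_eq_smul μ μH[Module.finrank ℝ E]]
  simp only [Measure.smul_apply, ENNReal.smul_def, smul_eq_mul]
  calc _ ≤ _ * ((K : ℝ≥0∞) ^ (Module.finrank ℝ E : ℝ) * μH[Module.finrank ℝ E] s) :=
        mul_le_mul_right (hf.hausdorffMeasure_image_le (Nat.cast_nonneg _)) _
    _ = _ := by rw [ENNReal.rpow_natCast]; ring

theorem IsCompact.eventually_measure_image_lt {α β ι : Type*} [TopologicalSpace α] [MetricSpace β]
    [MeasurableSpace β] [OpensMeasurableSpace β] [ProperSpace β] {μ : Measure β}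
    [IsFiniteMeasureOnCompacts μ] {l : Filter ι} {F : ι → α → β} {g : α → β} {K : Set α}
    (hK : IsCompact K) (hg : ContinuousOn g K) (hF : TendstoUniformlyOn F g l K) {c : ℝ≥0∞}
    (hc : μ (g '' K) < c) : ∀ᶠ i in l, μ (F i '' K) < c := by
  have hthick := ((tendsto_measure_cthickening_of_isCompact (μ := μ)
    (hK.image_of_continuousOn hg)).mono_left (nhdsWithin_le_nhds (s := Ioi 0))).eventually_lt_const
    hc
  obtain ⟨δ, hδc, hδ⟩ := (hthick.and self_mem_nhdsWithin).exists
  filter_upwards [Metric.tendstoUniformlyOn_iff.1 hF δ hδ] with i hi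
  refine (measure_mono ?_).trans_lt hδc
  rintro _ ⟨x, hx, rfl⟩
  exact mem_cthickening_of_dist_le _ (g x) _ _ (mem_image_of_mem g hx)
    (by rw [dist_comm]; exact (hi x hx).le)

theorem MeasurableSet.eventually_measure_image_lt {α β ι : Type*} [TopologicalSpace α] [T2Space α]
    [MeasurableSpace α] [OpensMeasurableSpace α] {ν : Measure α} [ν.InnerRegularCompactLTTop]
    [MetricSpace β] [MeasurableSpace β] [OpensMeasurableSpace β] [ProperSpace β] {μ : Measure β}
    [IsFiniteMeasureOnCompacts μ] {l : Filter ι} {F : ι → α → β} {g : α → β} {U : Set α}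
    (hU : MeasurableSet U) (hνU : ν U ≠ ∞) (hFν : ∀ i, ∀ t ⊆ U, μ (F i '' t) ≤ ν t)
    (hg : ContinuousOn g U) (hF : TendstoUniformlyOn F g l U) {c : ℝ≥0∞}
    (hc : μ (g '' U) < c) : ∀ᶠ i in l, μ (F i '' U) < c := by
  obtain ⟨b, hgb, hbc⟩ := exists_between hc
  obtain ⟨K, hKU, hK, hUK⟩ := hU.exists_isCompact_sdiff_lt hνU (tsub_pos_of_lt hbc).ne'
  filter_upwards [hK.eventually_measure_image_lt (hg.mono hKU) (hF.mono hKU)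
    ((measure_mono (image_mono hKU)).trans_lt hgb)] with i hi
  calc μ (F i '' U) ≤ μ (F i '' K ∪ F i '' (U \ K)) := by
        rw [← image_union, union_sdiff_cancel hKU]
    _ ≤ μ (F i '' K) + ν (U \ K) :=
        (measure_union_le _ _).trans (by gcongr; exact hFν i _ sdiff_subset)
    _ < b + (c - b) := ENNReal.add_lt_add hi hUK
    _ = c := add_tsub_cancel_of_le hbc.le

theorem stmt5 (U : Set (EuclideanSpace ℝ (Fin 2))) (hUb : Bornology.IsBounded U) (hUo : IsOpen U)
    (gs : ℕ → EuclideanSpace ℝ (Fin 2) → EuclideanSpace ℝ (Fin 2))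
    (g : EuclideanSpace ℝ (Fin 2) → EuclideanSpace ℝ (Fin 2))
    (hlip : ∀ n, ∀ x ∈ U, ∀ y ∈ U, dist (gs n x) (gs n y) ≤ dist x y)
    (hconv : TendstoUniformlyOn gs g Filter.atTop U)
    (hmeas : ∀ n : ℕ, 1 ≤ n → volume (gs n '' U) ≥ volume U - 1 / (n : ℝ≥0∞)) :
    volume (g '' U) = volume U := by
  have hUfin : volume U ≠ ∞ := hUb.measure_lt_top.ne
  have hgs_lip (n : ℕ) : LipschitzOnWith 1 (gs n) U :=
    LipschitzOnWith.of_dist_le_mul fun x hx y hy => by simpa using hlip n x hx y hy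
  have hg_lip : LipschitzOnWith 1 g U :=
    .of_tendsto (.of_forall hgs_lip) fun x hx => hconv.tendsto_at hx
  have hvol_le {f : EuclideanSpace ℝ (Fin 2) → EuclideanSpace ℝ (Fin 2)}
      (hf : LipschitzOnWith 1 f U) {t : Set (EuclideanSpace ℝ (Fin 2))} (ht : t ⊆ U) :
      volume (f '' t) ≤ volume t := by
    simpa using (hf.mono ht).addHaar_image_le volume
  have hlim : Tendsto (fun n => volume (gs n '' U)) atTop (𝓝 (volume U)) := by
    have hlower : Tendsto (fun n : ℕ => volume U - 1 / (n : ℝ≥0∞)) atTop (𝓝 (volume U)) := by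
      simpa [one_div] using
        ENNReal.Tendsto.sub tendsto_const_nhds ENNReal.tendsto_inv_nat_nhds_zero (.inl hUfin)
    exact tendsto_of_tendsto_of_tendsto_of_le_of_le' hlower tendsto_const_nhds
      (eventually_atTop.2 ⟨1, hmeas⟩) (.of_forall fun n => hvol_le (hgs_lip n) subset_rfl)
  refine le_antisymm (hvol_le hg_lip subset_rfl) (le_of_forall_gt_imp_ge_of_dense fun c hc => ?_)
  exact le_of_tendsto hlim <| (hUo.measurableSet.eventually_measure_image_lt hUfin
    (fun n _ ht => hvol_le (hgs_lip n) ht) hg_lip.continuousOn hconv hc).mono fun _ => le_of_lt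
end

section
/- Let U ⊆ ℝ² be a bounded connected open set, and suppose every point z ∈ U has a radius r > 0 with B(z, 2r) ⊆ U such that a given map f : U → ℝ² satisfies: f is 1-Lipschitz and λ(f(U)) = λ(U). Then for every z ∈ U and r with B(z,2r) ⊆ U, f restricted to B(z,r) preserves distances. -/
/-!
A `1`-Lipschitz map cannot increase Lebesgue measure, since Lebesgue measure is a multiple of
the top-dimensional Hausdorff measure. If `|f x - f y| < |x - y| = 2m`, the two closed balls of
radius `m` around `x` and `y` overlap only in a null set, while those around `f x` and `f y`
overlap in an open set; so the stadium `C` formed by the first two is mapped into a set of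
strictly smaller measure. Splitting `U = (U \ C) ∪ C` then gives `λ(f(U)) < λ(U)` whenever
`λ(U)` is finite.
-/

open MeasureTheory Metric Set

variable {E : Type*} [NormedAddCommGroup E] [NormedSpace ℝ E] [FiniteDimensional ℝ E]
  [MeasurableSpace E] [BorelSpace E] (μ : Measure E) [μ.IsAddHaarMeasure]

theorem LipschitzOnWith.addHaar_image_le_s16 {f : E → E} {s : Set E} (hf : LipschitzOnWith 1 f s) :
    μ (f '' s) ≤ μ s := by
  rw [Measure.isAddLeftInvariant_eq_smul μ μH[Module.finrank ℝ E], Measure.smul_apply,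
    Measure.smul_apply]
  gcongr _ • ?_
  simpa using hf.hausdorffMeasure_image_le (Nat.cast_nonneg _)

theorem measure_closedBall_union_closedBall [Nontrivial E] {x y : E} {m : ℝ}
    (hxy : 2 * m ≤ dist x y) :
    μ (closedBall x m ∪ closedBall y m) = μ (closedBall x m) + μ (closedBall y m) := by
  have hinter : closedBall x m ∩ closedBall y m ⊆ sphere x m := by
    rintro q ⟨hqx, hqy⟩
    rw [mem_closedBall] at hqx hqy
    have := dist_triangle_left x y q
    exact mem_sphere.2 (by linarith)
  rw [← measure_union_add_inter _ measurableSet_closedBall,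
    measure_mono_null hinter (Measure.addHaar_sphere μ x m), add_zero]

theorem measure_closedBall_union_closedBall_lt {x y : E} {m : ℝ} (hxy : dist x y < 2 * m) :
    μ (closedBall x m ∪ closedBall y m) < μ (closedBall x m) + μ (closedBall y m) := by
  have hmid : midpoint ℝ x y ∈ ball x m ∩ ball y m := by
    simp only [mem_inter_iff, mem_ball, dist_midpoint_left, dist_midpoint_right, Real.norm_two]
    constructor <;> linarith
  have hinter : 0 < μ (closedBall x m ∩ closedBall y m) :=
    ((isOpen_ball.inter isOpen_ball).measure_pos μ ⟨_, hmid⟩).trans_le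
      (measure_mono (inter_subset_inter ball_subset_closedBall ball_subset_closedBall))
  have hfin : μ (closedBall x m ∪ closedBall y m) ≠ ⊤ :=
    (isCompact_closedBall x m |>.union (isCompact_closedBall y m)).measure_ne_top
  rw [← measure_union_add_inter _ measurableSet_closedBall]
  exact ENNReal.lt_add_right hfin hinter.ne'

theorem LipschitzOnWith.measure_image_lt {f : E → E} {U C : Set E} (hf : LipschitzOnWith 1 f U)
    (hU : μ U ≠ ⊤) (hCU : C ⊆ U) (hC : MeasurableSet C) (hfC : μ (f '' C) < μ C) :
    μ (f '' U) < μ U :=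
  calc μ (f '' U) = μ (f '' (U \ C) ∪ f '' C) := by rw [← image_union, sdiff_union_of_subset hCU]
    _ ≤ μ (f '' (U \ C)) + μ (f '' C) := measure_union_le _ _
    _ ≤ μ (U \ C) + μ (f '' C) := by grw [(hf.mono sdiff_subset).addHaar_image_le_s16 μ]
    _ < μ (U \ C) + μ C := ENNReal.add_lt_add_left (measure_ne_top_of_subset sdiff_subset hU) hfC
    _ = μ U := by rw [← measure_sdiff_add_inter U hC, inter_eq_self_of_subset_right hCU]

theorem LipschitzOnWith.dist_eq_of_measure_image_eq [Nontrivial E] {f : E → E} {U : Set E}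
    (hf : LipschitzOnWith 1 f U) (hU : μ U ≠ ⊤) (hfU : μ (f '' U) = μ U) {x y : E}
    (hxy : closedBall x (dist x y / 2) ∪ closedBall y (dist x y / 2) ⊆ U) :
    dist (f x) (f y) = dist x y := by
  have hdist : ∀ a ∈ U, ∀ b ∈ U, dist (f a) (f b) ≤ dist a b := fun a ha b hb ↦ by
    simpa using hf.dist_le_mul a ha b hb
  set m := dist x y / 2 with hm_def
  have hm : 0 ≤ m := by positivity
  have hxU : x ∈ U := hxy (.inl (mem_closedBall_self hm))
  have hyU : y ∈ U := hxy (.inr (mem_closedBall_self hm))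
  by_contra hne
  have hlt : dist (f x) (f y) < dist x y := (hdist x hxU y hyU).lt_of_ne hne
  have hfC : f '' (closedBall x m ∪ closedBall y m) ⊆ closedBall (f x) m ∪ closedBall (f y) m := by
    rintro _ ⟨q, hq | hq, rfl⟩
    · exact .inl <| (hdist q (hxy (.inl hq)) x hxU).trans hq
    · exact .inr <| (hdist q (hxy (.inr hq)) y hyU).trans hq
  refine hfU.not_lt (hf.measure_image_lt μ hU hxy
    (measurableSet_closedBall.union measurableSet_closedBall) ?_)
  calc μ (f '' (closedBall x m ∪ closedBall y m))
      ≤ μ (closedBall (f x) m ∪ closedBall (f y) m) := measure_mono hfC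
    _ < μ (closedBall (f x) m) + μ (closedBall (f y) m) :=
      measure_closedBall_union_closedBall_lt μ (by linarith)
    _ = μ (closedBall x m ∪ closedBall y m) := by
      rw [measure_closedBall_union_closedBall μ (by linarith),
        Measure.addHaar_closedBall_center μ (f x), Measure.addHaar_closedBall_center μ (f y),
        Measure.addHaar_closedBall_center μ x, Measure.addHaar_closedBall_center μ y]

theorem stmt16_general (U : Set (EuclideanSpace ℝ (Fin 2))) (hUb : Bornology.IsBounded U)
    (f : EuclideanSpace ℝ (Fin 2) → EuclideanSpace ℝ (Fin 2))
    (hf : ∀ x ∈ U, ∀ y ∈ U, dist (f x) (f y) ≤ dist x y)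
    (hmeas : volume (f '' U) = volume U) :
    ∀ z ∈ U, ∀ r : ℝ, closedBall z (2 * r) ⊆ U →
      ∀ x ∈ closedBall z r, ∀ y ∈ closedBall z r, dist (f x) (f y) = dist x y := by
  intro z _ r hzr x hx y hy
  have hf' : LipschitzOnWith 1 f U := .mk_one hf
  refine hf'.dist_eq_of_measure_image_eq volume hUb.measure_lt_top.ne hmeas (hzr.trans' ?_)
  rw [mem_closedBall] at hx hy
  have hxy := dist_triangle_right x y z
  rintro q (hq | hq) <;> rw [mem_closedBall] at hq ⊢
  · linarith [dist_triangle q x z]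
  · linarith [dist_triangle q y z]

theorem stmt16 (U : Set (EuclideanSpace ℝ (Fin 2))) (hUb : Bornology.IsBounded U)
    (hUc : IsConnected U) (hUo : IsOpen U)
    (f : EuclideanSpace ℝ (Fin 2) → EuclideanSpace ℝ (Fin 2))
    (hf : ∀ x ∈ U, ∀ y ∈ U, dist (f x) (f y) ≤ dist x y)
    (hmeas : volume (f '' U) = volume U) :
    ∀ z ∈ U, ∀ r : ℝ, closedBall z (2 * r) ⊆ U →
      ∀ x ∈ closedBall z r, ∀ y ∈ closedBall z r, dist (f x) (f y) = dist x y :=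
  stmt16_general U hUb f hf hmeas
end
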